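/- For all subsets A, B of the real interval [1, ∞), the set {(x, y) ∈ [0,1]² : (∀ m ∈ A, m·x + y ≤ m) and (∀ m ∈ B, x + m·y ≤ m)} is not equal to the set {(x, y) ∈ [0,1]² : x + y ≤ 3/2}. -/
import Mathlib


/-- No intersection of bottleneck-type bounds `m·x + y ≤ m` (`m ∈ A`) and
`x + m·y ≤ m` (`m ∈ B`), with `A, B ⊆ [1,∞)`, carves out of the unit square the region
`{(x,y) ∈ [0,1]² : x + y ≤ 3/2}`. -/
theorem bottleneck_bounds_insufficient (A B : Set ℝ)
    (hA : A ⊆ Set.Ici (1 : ℝ)) (hB : B ⊆ Set.Ici (1 : ℝ)) :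
    {p : ℝ × ℝ | p.1 ∈ Set.Icc (0 : ℝ) 1 ∧ p.2 ∈ Set.Icc (0 : ℝ) 1 ∧
        (∀ m ∈ A, m * p.1 + p.2 ≤ m) ∧ (∀ m ∈ B, p.1 + m * p.2 ≤ m)} ≠
      {p : ℝ × ℝ | p.1 ∈ Set.Icc (0 : ℝ) 1 ∧ p.2 ∈ Set.Icc (0 : ℝ) 1 ∧
        p.1 + p.2 ≤ 3 / 2} := by
  intro h
  have h1 : ((1 : ℝ), (1/2 : ℝ)) ∈ {p : ℝ × ℝ | p.1 ∈ Set.Icc (0 : ℝ) 1 ∧ p.2 ∈ Set.Icc (0 : ℝ) 1 ∧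
        (∀ m ∈ A, m * p.1 + p.2 ≤ m) ∧ (∀ m ∈ B, p.1 + m * p.2 ≤ m)} := by
    rw [h]
    refine ⟨by norm_num, by norm_num, by norm_num⟩
  have h2 : ((1/2 : ℝ), (1 : ℝ)) ∈ {p : ℝ × ℝ | p.1 ∈ Set.Icc (0 : ℝ) 1 ∧ p.2 ∈ Set.Icc (0 : ℝ) 1 ∧
        (∀ m ∈ A, m * p.1 + p.2 ≤ m) ∧ (∀ m ∈ B, p.1 + m * p.2 ≤ m)} := by
    rw [h]
    refine ⟨by norm_num, by norm_num, by norm_num⟩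
  have hAe : A = ∅ := by
    by_contra hne
    obtain ⟨m, hm⟩ := Set.nonempty_iff_ne_empty.mpr hne
    have := h1.2.2.1 m hm
    simp only at this
    linarith
  have hBe : B = ∅ := by
    by_contra hne
    obtain ⟨m, hm⟩ := Set.nonempty_iff_ne_empty.mpr hne
    have := h2.2.2.2 m hm
    simp only at this
    linarith
  have h3 : ((1 : ℝ), (1 : ℝ)) ∈ {p : ℝ × ℝ | p.1 ∈ Set.Icc (0 : ℝ) 1 ∧ p.2 ∈ Set.Icc (0 : ℝ) 1 ∧
        (∀ m ∈ A, m * p.1 + p.2 ≤ m) ∧ (∀ m ∈ B, p.1 + m * p.2 ≤ m)} := by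
    refine ⟨by norm_num, by norm_num, ?_, ?_⟩ <;> simp [hAe, hBe]
  rw [h] at h3
  have := h3.2.2
  norm_num at this
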